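/- Let σ, τ be types, let F range over functions from the interpretation of σ to that of τ that are either strongly monotonic or constant. Then it is impossible that F is constant, G is strongly monotonic, and F(x) ⊐_τ G(x) for all x. -/
import Mathlib


/-- Simple types over a set of sorts `S`. -/
inductive Ty (S : Type) : Type where
  | base : S → Ty S
  | arrow : Ty S → Ty S → Ty S

/-- The interpretation of types: a base sort `ι` is interpreted as the set of
tuples `ℕ^{K ι + 1}` (so tuples always have length ≥ 1), and an arrow type as
the full function space (membership in the strongly monotonic functionals is
the predicate `Mem` below). -/
def Interp {S : Type} (K : S → ℕ) : Ty S → Type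
  | .base ι => Fin (K ι + 1) → ℕ
  | .arrow σ τ => Interp K σ → Interp K τ

mutual
/-- Membership in the set of strongly monotonic functionals of type `σ`. -/
def Mem {S : Type} (K : S → ℕ) : (σ : Ty S) → Interp K σ → Prop
  | .base _, _ => True
  | .arrow σ τ, F =>
      (∀ x, Mem K σ x → Mem K τ (F x)) ∧
      (∀ x y, Mem K σ x → Mem K σ y → TGt K σ x y → TGt K τ (F x) (F y)) ∧
      (∀ x y, Mem K σ x → Mem K σ y → TGe K σ x y → TGe K τ (F x) (F y))

/-- The hereditary strict order `⊐` on the interpretation of a type. -/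
def TGt {S : Type} (K : S → ℕ) : (σ : Ty S) → Interp K σ → Interp K σ → Prop
  | .base _, x, y => (∀ i, y i ≤ x i) ∧ y 0 < x 0
  | .arrow σ τ, F, G => (∃ x, Mem K σ x) ∧ ∀ x, Mem K σ x → TGt K τ (F x) (G x)

/-- The hereditary weak order `⊒` on the interpretation of a type. -/
def TGe {S : Type} (K : S → ℕ) : (σ : Ty S) → Interp K σ → Interp K σ → Prop
  | .base _, x, y => ∀ i, y i ≤ x i
  | .arrow σ τ, F, G => ∀ x, Mem K σ x → TGe K τ (F x) (G x)
end

/-- `addcost σ c x` hereditarily adds `c` to the cost (first) component. -/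
def addcost {S : Type} (K : S → ℕ) : (σ : Ty S) → ℕ → Interp K σ → Interp K σ
  | .base _, c, x => fun i => if i = 0 then c + x i else x i
  | .arrow σ τ, c, F => fun d => addcost K τ c (F d)

mutual
/-- The hereditarily minimal element `0_σ`. -/
def nul {S : Type} (K : S → ℕ) : (σ : Ty S) → Interp K σ
  | .base _ => fun _ => 0
  | .arrow σ τ => fun d => addcost K τ (cost K σ d) (nul K τ)

/-- The hereditary cost extraction `cost_σ`. -/
def cost {S : Type} (K : S → ℕ) : (σ : Ty S) → Interp K σ → ℕ
  | .base _, x => x 0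
  | .arrow σ τ, F => cost K τ (F (nul K σ))
end

lemma big {S : Type} (K : S → ℕ) : ∀ σ : Ty S,
    (∀ x : Interp K σ, TGe K σ x x) ∧
    (∀ c x, Mem K σ x → Mem K σ (addcost K σ c x)) ∧
    (∀ c c' x y, c' < c → TGe K σ x y → TGt K σ (addcost K σ c x) (addcost K σ c' y)) ∧
    (∀ c c' x y, c' ≤ c → TGe K σ x y → TGe K σ (addcost K σ c x) (addcost K σ c' y)) ∧
    Mem K σ (nul K σ) ∧
    (∀ x y, TGt K σ x y → cost K σ y < cost K σ x) ∧
    (∀ x y, TGe K σ x y → cost K σ y ≤ cost K σ x) ∧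
    (∀ c x y, TGt K σ x y → TGt K σ (addcost K σ c x) (addcost K σ c y)) := by
  intro σ
  induction σ with
  | base ι =>
    refine ⟨fun x i => le_rfl, fun _ _ _ => trivial, ?_, ?_, trivial, ?_, ?_, ?_⟩
    · intro c c' x y hc hxy
      refine ⟨?_, ?_⟩
      · intro i
        simp only [addcost]
        by_cases hi : i = 0
        · simp only [hi, if_pos rfl]
          exact Nat.add_le_add (le_of_lt hc) (hxy 0)
        · simp only [if_neg hi]
          exact hxy i
      · simp only [addcost, if_pos rfl, if_true]
        have := hxy 0
        omega
    · intro c c' x y hc hxy i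
      simp only [addcost]
      by_cases hi : i = 0
      · simp only [hi, if_pos rfl]
        exact Nat.add_le_add hc (hxy 0)
      · simp only [if_neg hi]
        exact hxy i
    · intro x y hxy; exact hxy.2
    · intro x y hxy; exact hxy 0
    · intro c x y hxy
      refine ⟨?_, ?_⟩
      · intro i
        simp only [addcost]
        by_cases hi : i = 0
        · simp only [hi, if_pos rfl]
          exact Nat.add_le_add_left (hxy.1 0) c
        · simp only [if_neg hi]
          exact hxy.1 i
      · simp only [addcost, if_pos rfl, if_true]
        have := hxy.2
        omega
  | arrow σ τ ihσ ihτ =>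
    obtain ⟨reflσ, memaddσ, gtaddσ, geaddσ, nulσ, costgtσ, costgeσ, gtcongσ⟩ := ihσ
    obtain ⟨reflτ, memaddτ, gtaddτ, geaddτ, nulτ, costgtτ, costgeτ, gtcongτ⟩ := ihτ
    refine ⟨?_, ?_, ?_, ?_, ?_, ?_, ?_, ?_⟩
    · intro F x _; exact reflτ (F x)
    · intro c F hF
      refine ⟨fun x hx => memaddτ c (F x) (hF.1 x hx),
        fun x y hx hy hxy => gtcongτ c _ _ (hF.2.1 x y hx hy hxy),
        fun x y hx hy hxy => geaddτ c c _ _ le_rfl (hF.2.2 x y hx hy hxy)⟩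
    · intro c c' F G hc hFG
      exact ⟨⟨nul K σ, nulσ⟩, fun x hx => gtaddτ c c' (F x) (G x) hc (hFG x hx)⟩
    · intro c c' F G hc hFG
      exact fun x hx => geaddτ c c' (F x) (G x) hc (hFG x hx)
    · refine ⟨fun x _ => memaddτ _ _ nulτ, ?_, ?_⟩
      · intro x y hx hy hxy
        exact gtaddτ _ _ _ _ (costgtσ x y hxy) (reflτ _)
      · intro x y hx hy hxy
        exact geaddτ _ _ _ _ (costgeσ x y hxy) (reflτ _)
    · intro F G hFG
      exact costgtτ _ _ (hFG.2 (nul K σ) nulσ)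
    · intro F G hFG
      exact costgeτ _ _ (hFG (nul K σ) nulσ)
    · intro c F G hFG
      exact ⟨hFG.1, fun x hx => gtcongτ c _ _ (hFG.2 x hx)⟩

/-- It is impossible that `F` is a constant function (mapping into the
interpretation of `τ`), `G` is strongly monotonic, and `F(x) ⊐_τ G(x)` for all
`x` in the interpretation of `σ`. -/
theorem no_constant_above_strongMono {S : Type} (K : S → ℕ) (σ τ : Ty S)
    (F G : Interp K (Ty.arrow σ τ))
    (hFmaps : ∀ x, Mem K σ x → Mem K τ (F x))
    (hFconst : ∀ x y, Mem K σ x → Mem K σ y → F x = F y)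
    (hG : Mem K (Ty.arrow σ τ) G)
    (h : ∀ x, Mem K σ x → TGt K τ (F x) (G x)) :
    False := by
  obtain ⟨reflσ, memaddσ, gtaddσ, geaddσ, nulσ, costgtσ, costgeσ, gtcongσ⟩ := big K σ
  obtain ⟨reflτ, memaddτ, gtaddτ, geaddτ, nulτ, costgtτ, costgeτ, gtcongτ⟩ := big K τ
  obtain ⟨hGmaps, hGgt, hGge⟩ := hG
  have memk : ∀ k : ℕ, Mem K σ (addcost K σ k (nul K σ)) := fun k => memaddσ k _ nulσ
  have chain : ∀ k : ℕ, (k : ℕ) ≤ cost K τ (G (addcost K σ k (nul K σ))) := by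
    intro k
    induction k with
    | zero => exact Nat.zero_le _
    | succ n ih =>
      have hstep : TGt K σ (addcost K σ (n+1) (nul K σ)) (addcost K σ n (nul K σ)) :=
        gtaddσ (n+1) n _ _ (Nat.lt_succ_self n) (reflσ _)
      have := costgtτ _ _ (hGgt _ _ (memk (n+1)) (memk n) hstep)
      omega
  set m := cost K τ (F (nul K σ)) with hm
  have hx := memk (m+1)
  have h1 : cost K τ (G (addcost K σ (m+1) (nul K σ))) < m := by
    have := costgtτ _ _ (h _ hx)
    rwa [hFconst _ _ hx nulσ] at this
  have h2 := chain (m+1)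
  omega
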